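/- If a continuous function U: ℝ^N → ℝ is monotone nondecreasing in every direction of an open cone C⁺ = {x ≠ 0 : cos θ < x·e₁/|x| ≤ 1} (i.e., U(x+y) ≥ U(x) for all y ∈ C⁺), and φ ∈ C^{1,1}(x₀) touches U from above at x₀ with ∇φ(x₀) ≠ 0, then the unit direction v of ∇φ(x₀) satisfies v·e₁ ≥ cos(π/2 - θ). -/

import Mathlib

open MeasureTheory Metric Set Real

noncomputable section

/-- `φ` is `C^{1,1}` at `x₀` with gradient vector `p`. -/
def C11At {N : ℕ} (φ : EuclideanSpace ℝ (Fin N) → ℝ) (x₀ p : EuclideanSpace ℝ (Fin N)) : Prop :=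
  ∃ M η₀ : ℝ, 0 < M ∧ 0 < η₀ ∧ ∀ x : EuclideanSpace ℝ (Fin N), ‖x‖ < η₀ →
    |φ (x₀ + x) - φ x₀ - (inner ℝ p x : ℝ)| ≤ M * ‖x‖ ^ 2

/-!
The gradient `p` of a function touching `U` from above at `x₀` satisfies `⟪p, y⟫ ≥ 0` for every
direction `y` in which `U` is nondecreasing: `φ - φ x₀ ≥ U - U x₀ ≥ 0` along the ray `x₀ + t y`.
So `p` lies in the dual cone of `C⁺`, which is the cone of half-angle `π/2 - θ` around `e₁`.
To see this, write `p = a e₁ + w` with `w ⊥ e₁`; rotating `e₁` away from `w` by an angle `s < θ`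
stays in `C⁺`, and letting `s → θ` gives `a cos θ ≥ ‖w‖ sin θ`, i.e. `a ≥ ‖p‖ sin θ`.
-/

open Filter Topology Asymptotics
open scoped InnerProductSpace

theorem C11At.hasFDerivAt {N : ℕ} {φ : EuclideanSpace ℝ (Fin N) → ℝ}
    {x₀ p : EuclideanSpace ℝ (Fin N)} (h : C11At φ x₀ p) :
    HasFDerivAt φ (innerSL ℝ p) x₀ := by
  obtain ⟨M, η₀, -, hη₀, hbound⟩ := h
  rw [hasFDerivAt_iff_isLittleO_nhds_zero]
  refine IsBigO.trans_isLittleO (IsBigO.of_bound M ?_) (isLittleO_norm_pow_id one_lt_two)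
  filter_upwards [ball_mem_nhds 0 hη₀] with x hx
  simpa using hbound x (mem_ball_zero_iff.mp hx)

section Cone

variable {E : Type*} [NormedAddCommGroup E] [InnerProductSpace ℝ E]

theorem inner_nonneg_of_touches_above {U φ : E → ℝ} {x₀ p y : E}
    (hφ : HasFDerivAt φ (innerSL ℝ p) x₀) (heq : φ x₀ = U x₀) (hle : ∀ᶠ x in 𝓝 x₀, U x ≤ φ x)
    (hray : ∀ t : ℝ, 0 < t → U x₀ ≤ U (x₀ + t • y)) : 0 ≤ ⟪p, y⟫_ℝ := by
  set s := {x | U x₀ ≤ U x}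
  have hmin : IsLocalMinOn φ s x₀ := by
    filter_upwards [nhdsWithin_le_nhds hle, self_mem_nhdsWithin] with x hUφ hx
    exact heq ▸ hx.trans hUφ
  have hy : y ∈ posTangentConeAt s x₀ := by
    refine mem_posTangentConeAt_of_segment_subset ?_
    rw [segment_eq_image']
    rintro _ ⟨t, ht, rfl⟩
    rcases ht.1.eq_or_lt with rfl | ht0
    · simp [s]
    · simpa [s] using hray t ht0
  simpa using hmin.hasFDerivWithinAt_nonneg hφ.hasFDerivWithinAt hy

/-- For a unit vector `e` and `c = cos θ` this is the cone `C⁺` of half-angle `θ` around `e`. -/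
def circularCone (e : E) (c : ℝ) : Set E :=
  {y | c * ‖y‖ < ⟪y, e⟫_ℝ}

theorem mem_circularCone_iff {e y : E} {c : ℝ} :
    y ∈ circularCone e c ↔ y ≠ 0 ∧ c < ⟪y, e⟫_ℝ / ‖y‖ := by
  by_cases hy : y = 0
  · simp [circularCone, hy]
  · simp [circularCone, hy, lt_div_iff₀ (norm_pos_iff.mpr hy)]

theorem smul_mem_circularCone {e y : E} {c t : ℝ} (ht : 0 < t) (hy : y ∈ circularCone e c) :
    t • y ∈ circularCone e c := by
  simp only [circularCone, mem_ofPred_eq, norm_smul, real_inner_smul_left,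
    Real.norm_of_nonneg ht.le, mul_left_comm c t] at hy ⊢
  exact mul_lt_mul_of_pos_left hy ht

theorem cos_smul_sub_sin_smul_mem_circularCone {e u : E} {c s : ℝ} (he : ‖e‖ = 1)
    (hu : ‖u‖ ≤ 1) (hue : ⟪u, e⟫_ℝ = 0) (hc : 0 ≤ c) (hcs : c < cos s) :
    cos s • e - sin s • u ∈ circularCone e c := by
  have hnorm_sq : ‖cos s • e - sin s • u‖ ^ 2 ≤ 1 := by
    rw [norm_sub_sq_real, real_inner_smul_left, real_inner_smul_right, real_inner_comm, hue,
      norm_smul, norm_smul, he, Real.norm_eq_abs, Real.norm_eq_abs]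
    simp only [mul_zero, sub_zero, mul_one, mul_pow, sq_abs]
    nlinarith [sin_sq_add_cos_sq s, pow_le_one₀ (n := 2) (norm_nonneg u) hu, sq_nonneg (sin s)]
  have hnorm : ‖cos s • e - sin s • u‖ ≤ 1 := by
    simpa using (sq_le_one_iff₀ (norm_nonneg _)).mp hnorm_sq
  have hinner : ⟪cos s • e - sin s • u, e⟫_ℝ = cos s := by
    rw [inner_sub_left, real_inner_smul_left, real_inner_smul_left, hue,
      real_inner_self_eq_norm_sq, he]
    ring
  change c * _ < _
  rw [hinner]
  nlinarith

theorem cos_mul_sub_sin_mul_nonneg_of_forall_circularCone {e p : E} {θ : ℝ} (he : ‖e‖ = 1)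
    (hθ0 : 0 < θ) (hθ : θ < π / 2) (hp : ∀ y ∈ circularCone e (cos θ), 0 ≤ ⟪p, y⟫_ℝ) :
    0 ≤ cos θ * ⟪p, e⟫_ℝ - sin θ * ‖p - ⟪p, e⟫_ℝ • e‖ := by
  set a := ⟪p, e⟫_ℝ
  set w := p - a • e
  set u := ‖w‖⁻¹ • w
  have hwe : ⟪w, e⟫_ℝ = 0 := by
    rw [inner_sub_left, real_inner_smul_left, real_inner_self_eq_norm_sq, he]
    ring
  have hue : ⟪u, e⟫_ℝ = 0 := by rw [real_inner_smul_left, hwe, mul_zero]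
  have hu : ‖u‖ ≤ 1 := by
    rw [norm_smul, norm_inv, norm_norm]
    exact inv_mul_le_one_of_le₀ le_rfl (norm_nonneg w)
  have hpu : ⟪p, u⟫_ℝ = ‖w‖ := by
    have hpw : ⟪p, w⟫_ℝ = ‖w‖ * ‖w‖ := by
      rw [← real_inner_self_eq_norm_mul_norm, inner_sub_left, real_inner_smul_left,
        real_inner_comm w e, hwe, mul_zero, sub_zero]
    rw [real_inner_smul_right, hpw, ← mul_assoc, inv_mul_mul_self]
  have hrot : ∀ s ∈ Ioo 0 θ, 0 ≤ cos s * a - sin s * ‖w‖ := by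
    intro s hs
    have hcs : cos θ < cos s :=
      strictAntiOn_cos ⟨hs.1.le, by linarith [hs.2, pi_pos]⟩ ⟨hθ0.le, by linarith [pi_pos]⟩ hs.2
    have hcos : 0 < cos θ := cos_pos_of_mem_Ioo ⟨by linarith, hθ⟩
    have := hp _ (cos_smul_sub_sin_smul_mem_circularCone he hu hue hcos.le hcs)
    rwa [inner_sub_right, real_inner_smul_right, real_inner_smul_right, hpu] at this
  have hclosed : IsClosed {s | 0 ≤ cos s * a - sin s * ‖w‖} :=
    isClosed_le continuous_const (by fun_prop)
  have hIcc := hclosed.closure_subset_iff.mpr hrot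
  rw [closure_Ioo hθ0.ne] at hIcc
  exact hIcc ⟨hθ0.le, le_rfl⟩

theorem sin_mul_norm_le_inner_of_forall_circularCone {e p : E} {θ : ℝ} (he : ‖e‖ = 1)
    (hθ0 : 0 < θ) (hθ : θ < π / 2) (hp : ∀ y ∈ circularCone e (cos θ), 0 ≤ ⟪p, y⟫_ℝ) :
    sin θ * ‖p‖ ≤ ⟪p, e⟫_ℝ := by
  have hrot := cos_mul_sub_sin_mul_nonneg_of_forall_circularCone he hθ0 hθ hp
  set a := ⟪p, e⟫_ℝ
  set w := p - a • e
  have hpw : ‖p‖ ^ 2 = a ^ 2 + ‖w‖ ^ 2 := by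
    have hwe : ⟪e, w⟫_ℝ = 0 := by
      rw [inner_sub_right, real_inner_smul_right, real_inner_self_eq_norm_sq, he,
        real_inner_comm]
      ring
    rw [← sub_add_cancel p (a • e), norm_add_sq_real, real_inner_smul_right, real_inner_comm,
      hwe, norm_smul, he, Real.norm_eq_abs, mul_one, sq_abs]
    ring
  have hcos : 0 < cos θ := cos_pos_of_mem_Ioo ⟨by linarith, hθ⟩
  have hsin : 0 < sin θ := sin_pos_of_pos_of_lt_pi hθ0 (by linarith)
  have ha : 0 ≤ a := by nlinarith [norm_nonneg w]
  have hsq : (sin θ * ‖p‖) ^ 2 ≤ a ^ 2 := by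
    have := mul_self_le_mul_self (by positivity) (sub_nonneg.mp hrot)
    nlinarith [sin_sq_add_cos_sq θ]
  exact (pow_le_pow_iff_left₀ (by positivity) ha two_ne_zero).mp hsq

end Cone

theorem stmt_13_general {N : ℕ} (hN : 0 < N) (θ : ℝ) (hθ0 : 0 < θ) (hθ : θ < π / 2)
    (U : EuclideanSpace ℝ (Fin N) → ℝ)
    (hmono : ∀ x : EuclideanSpace ℝ (Fin N),
      ∀ y ∈ {y : EuclideanSpace ℝ (Fin N) | y ≠ 0 ∧
        Real.cos θ < (inner ℝ y (EuclideanSpace.single (⟨0, hN⟩ : Fin N) (1 : ℝ)) : ℝ) / ‖y‖},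
      U x ≤ U (x + y))
    (x₀ : EuclideanSpace ℝ (Fin N))
    (φ : EuclideanSpace ℝ (Fin N) → ℝ) (p : EuclideanSpace ℝ (Fin N))
    (hC11 : C11At φ x₀ p) (hp : p ≠ 0)
    (htouch : φ x₀ = U x₀ ∧ ∃ ε > (0 : ℝ), ∀ x ∈ Metric.ball x₀ ε, U x ≤ φ x) :
    Real.cos (π / 2 - θ) ≤
      (inner ℝ (‖p‖⁻¹ • p) (EuclideanSpace.single (⟨0, hN⟩ : Fin N) (1 : ℝ)) : ℝ) := by
  obtain ⟨hφx₀, ε, hε, hUφ⟩ := htouch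
  set e := EuclideanSpace.single (⟨0, hN⟩ : Fin N) (1 : ℝ)
  have he : ‖e‖ = 1 := by simp [e]
  have hdual : ∀ y ∈ circularCone e (cos θ), 0 ≤ ⟪p, y⟫_ℝ := fun y hy =>
    inner_nonneg_of_touches_above hC11.hasFDerivAt hφx₀
      (eventually_of_mem (ball_mem_nhds x₀ hε) hUφ)
      fun t ht => hmono x₀ (t • y) (mem_circularCone_iff.mp (smul_mem_circularCone ht hy))
  rw [cos_pi_div_two_sub, real_inner_smul_left, inv_mul_eq_div,
    le_div_iff₀ (norm_pos_iff.mpr hp)]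
  exact sin_mul_norm_le_inner_of_forall_circularCone he hθ0 hθ hdual

/-- if `U` is nondecreasing in every direction of the cone
`C⁺ = {x ≠ 0 : cos θ < x·e₁/|x| ≤ 1}` and `φ ∈ C^{1,1}(x₀)` touches `U` from above
at `x₀` with nonzero gradient, then the unit direction `v` of the gradient
satisfies `v·e₁ ≥ cos(π/2 - θ)`. -/
theorem stmt_13 {N : ℕ} (hN : 0 < N) (θ : ℝ) (hθ0 : 0 < θ) (hθ : θ < π / 2)
    (U : EuclideanSpace ℝ (Fin N) → ℝ) (hU_cont : Continuous U)
    (hmono : ∀ x : EuclideanSpace ℝ (Fin N),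
      ∀ y ∈ {y : EuclideanSpace ℝ (Fin N) | y ≠ 0 ∧
        Real.cos θ < (inner ℝ y (EuclideanSpace.single (⟨0, hN⟩ : Fin N) (1 : ℝ)) : ℝ) / ‖y‖},
      U x ≤ U (x + y))
    (x₀ : EuclideanSpace ℝ (Fin N))
    (φ : EuclideanSpace ℝ (Fin N) → ℝ) (p : EuclideanSpace ℝ (Fin N))
    (hC11 : C11At φ x₀ p) (hp : p ≠ 0)
    (htouch : φ x₀ = U x₀ ∧ ∃ ε > (0 : ℝ), ∀ x ∈ Metric.ball x₀ ε, U x ≤ φ x) :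
    Real.cos (π / 2 - θ) ≤
      (inner ℝ (‖p‖⁻¹ • p) (EuclideanSpace.single (⟨0, hN⟩ : Fin N) (1 : ℝ)) : ℝ) :=
  stmt_13_general hN θ hθ0 hθ U hmono x₀ φ p hC11 hp htouch
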